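/- arXiv:1910.02986 — 2 statements merged into one kernel-verified Lean document; each statement's English description precedes it below -/
import Mathlib

section
/- (Theorem 1, Consistency of the combined GMM estimator.) Assume: Θ ⊂ ℝ^p is compact with β₀ ∈ Θ; m is continuous on Θ with unique zero at β₀; v(β₀) is symmetric positive definite; sup_{β∈Θ} ‖Ψ_N(β) − m(β)‖ → 0 in probability; V̂_N is invertible with probability tending to one and V̂_N⁻¹ converges in probability to v(β₀)⁻¹; and β̂_c^N : Ω → Θ is a measurable sequence satisfying Q_N(β̂_c^N) ≤ inf_{β∈Θ} Q_N(β) + o_p(1), where Q_N(β) = N Ψ_N(β)ᵀ V̂_N⁻¹ Ψ_N(β). Then β̂_c^N converges in probability to β₀ as N → ∞. -/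
open MeasureTheory ProbabilityTheory Filter Matrix
open scoped ENNReal NNReal RealInnerProductSpace BigOperators Classical

noncomputable section DIMMSetup

/-- The standard Gaussian measure on `EuclideanSpace ℝ ι`: the pushforward of the
`ι`-indexed product of standard real Gaussians under the canonical identification. -/
def stdGaussian (ι : Type*) [Fintype ι] : Measure (EuclideanSpace ℝ ι) :=
  Measure.map (⇑(EuclideanSpace.equiv ι ℝ).symm) (Measure.pi fun _ : ι => gaussianReal 0 1)

/-- The positive semidefinite square root of a matrix (junk value `0` when the matrix is
not positive semidefinite). -/
def matSqrt {ι : Type*} [Fintype ι] [DecidableEq ι] (S : Matrix ι ι ℝ) : Matrix ι ι ℝ :=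
  if h : S.PosSemidef then
    h.1.eigenvectorUnitary.1 * diagonal ((↑) ∘ (√·) ∘ h.1.eigenvalues) *
      (star h.1.eigenvectorUnitary : Matrix ι ι ℝ) else 0

/-- Matrix-vector multiplication as a map of Euclidean spaces. -/
def mulVecE {m n : Type*} [Fintype n] (A : Matrix m n ℝ) (x : EuclideanSpace ℝ n) :
    EuclideanSpace ℝ m :=
  (WithLp.equiv 2 (m → ℝ)).symm (A.mulVec ((WithLp.equiv 2 (n → ℝ)) x))

/-- The multivariate normal distribution `N(0, S)`: the pushforward of the standard Gaussian
under `x ↦ S^{1/2} x`, where `S^{1/2}` is the positive semidefinite square root. -/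
def mvNormal {ι : Type*} [Fintype ι] [DecidableEq ι] (S : Matrix ι ι ℝ) :
    Measure (EuclideanSpace ℝ ι) :=
  (stdGaussian ι).map (fun x => mulVecE (matSqrt S) x)

/-- The chi-squared distribution with `k` degrees of freedom: the law of `‖Z‖²` for a
standard Gaussian `Z` on `ℝ^k`. -/
def chiSq (k : ℕ) : Measure ℝ :=
  (stdGaussian (Fin k)).map (fun x => ‖x‖ ^ 2)

/-- Convergence in distribution: weak convergence of the laws of the random elements
`X N` to the measure `μ`. -/
def ConvInDist {Ω V : Type*} [MeasurableSpace Ω] [TopologicalSpace V] [MeasurableSpace V]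
    (P : Measure Ω) (X : ℕ → Ω → V) (μ : Measure V) : Prop :=
  ∀ f : BoundedContinuousFunction V ℝ,
    Tendsto (fun N => ∫ ω, f (X N ω) ∂P) atTop (nhds (∫ x, f x ∂μ))

/-- The ℓ²→ℓ² operator norm of a matrix (the operator norm induced by the Euclidean norms). -/
def opNorm {m n : Type*} [Fintype m] [Fintype n] [DecidableEq n] (A : Matrix m n ℝ) : ℝ :=
  ‖LinearMap.toContinuousLinearMap (Matrix.toEuclideanLin A)‖

/-- A sequence of real random variables is bounded in probability (`O_p(1)`): for every
`ε > 0` there is `M` with `limsup_N P(|X_N| > M) < ε`. -/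
def BddInProb {Ω : Type*} [MeasurableSpace Ω] (P : Measure Ω) (X : ℕ → Ω → ℝ) : Prop :=
  ∀ ε : ℝ≥0∞, 0 < ε → ∃ M : ℝ, Filter.limsup (fun N => P {ω | M < |X N ω|}) atTop < ε

/-- The `(i,j)`-th `p × p` block of a `(Jp) × (Jp)` matrix, where `ℝ^{Jp}` is indexed by
`Fin J × Fin p` (the pair `(j, a)` encodes coordinate `(j-1)p + a`). -/
def blockOf {J p : ℕ} (W : Matrix (Fin J × Fin p) (Fin J × Fin p) ℝ) (i j : Fin J) :
    Matrix (Fin p) (Fin p) ℝ :=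
  fun a b => W (i, a) (j, b)

/-- The `j`-th `p × p` block of a `(Jp) × p` matrix (the `j`-th block of rows). -/
def rowBlockOf {J p : ℕ} (S : Matrix (Fin J × Fin p) (Fin p) ℝ) (j : Fin J) :
    Matrix (Fin p) (Fin p) ℝ :=
  fun a b => S (j, a) b

end DIMMSetup

/-! Off any ball around `β₀`, compactness and the unique zero of `m` give `‖m‖ ≥ δ > 0`.
Once `V̂_N⁻¹` is entrywise close to the positive definite `v(β₀)⁻¹`, its quadratic form is
squeezed between `c‖x‖²` and `C‖x‖²`; if moreover `Ψ_N` is uniformly `η`-close to `m` on `Θ`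
with `η` small, then `Q_N(β₀) ≤ N C η²` while `Q_N(β) ≥ N c (δ/2)²` off the ball, a gap growing
linearly in `N`. An optimisation error below `1` cannot bridge it, so the near-minimiser lies
in the ball outside an event whose probability tends to zero. -/

open Topology

section QuadForm

variable {ι : Type*} [Fintype ι]

def quadForm (A : Matrix ι ι ℝ) (x : EuclideanSpace ℝ ι) : ℝ :=
  ∑ k, ∑ l, x k * (A k l * x l)

lemma quadForm_sub (A B : Matrix ι ι ℝ) (x : EuclideanSpace ℝ ι) :
    quadForm (A - B) x = quadForm A x - quadForm B x := by
  simp only [quadForm, Matrix.sub_apply, sub_mul, mul_sub, Finset.sum_sub_distrib]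

lemma quadForm_smul (A : Matrix ι ι ℝ) (t : ℝ) (x : EuclideanSpace ℝ ι) :
    quadForm A (t • x) = t ^ 2 * quadForm A x := by
  simp only [quadForm, Finset.mul_sum, PiLp.smul_apply, smul_eq_mul]
  ring_nf

lemma continuous_quadForm (A : Matrix ι ι ℝ) : Continuous (quadForm A) := by
  unfold quadForm
  fun_prop

lemma abs_quadForm_le (A : Matrix ι ι ℝ) (x : EuclideanSpace ℝ ι) :
    |quadForm A x| ≤ (∑ k, ∑ l, |A k l|) * ‖x‖ ^ 2 := by
  simp only [quadForm, Finset.sum_mul]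
  refine (Finset.abs_sum_le_sum_abs _ _).trans <| Finset.sum_le_sum fun k _ =>
    (Finset.abs_sum_le_sum_abs _ _).trans <| Finset.sum_le_sum fun l _ => ?_
  have hk : |x k| ≤ ‖x‖ := PiLp.norm_apply_le x k
  have hl : |x l| ≤ ‖x‖ := PiLp.norm_apply_le x l
  rw [abs_mul, abs_mul]
  calc |x k| * (|A k l| * |x l|) = |A k l| * (|x k| * |x l|) := by ring
    _ ≤ |A k l| * ‖x‖ ^ 2 := by rw [sq]; gcongr

lemma Matrix.PosDef.exists_pos_mul_sq_norm_le_quadForm [DecidableEq ι] {A : Matrix ι ι ℝ}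
    (hA : A.PosDef) : ∃ c > 0, ∀ x, c * ‖x‖ ^ 2 ≤ quadForm A x := by
  have hpos : ∀ u ∈ Metric.sphere (0 : EuclideanSpace ℝ ι) 1, 0 < quadForm A u := by
    intro u hu
    have hu0 : (WithLp.equiv 2 _ u) ≠ 0 := by
      rintro h
      simp [show u = 0 from (WithLp.equiv 2 _).injective (by simpa using h)] at hu
    simpa [quadForm, dotProduct, mulVec, Finset.mul_sum] using hA.dotProduct_mulVec_pos hu0
  obtain ⟨c, hc, hcu⟩ := (isCompact_sphere 0 1).exists_forall_le'
    (continuous_quadForm A).continuousOn hpos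
  refine ⟨c, hc, fun x => ?_⟩
  rcases eq_or_ne x 0 with rfl | hx
  · simp [quadForm]
  have hnx : 0 < ‖x‖ := norm_pos_iff.2 hx
  have hu : ‖x‖⁻¹ • x ∈ Metric.sphere (0 : EuclideanSpace ℝ ι) 1 := by
    simp [norm_smul, hnx.ne']
  calc c * ‖x‖ ^ 2 ≤ quadForm A (‖x‖⁻¹ • x) * ‖x‖ ^ 2 := by gcongr; exact hcu _ hu
    _ = quadForm A x := by rw [quadForm_smul]; field_simp

lemma Matrix.PosDef.exists_quadForm_bounds_of_near [DecidableEq ι] {W : Matrix ι ι ℝ} (hW : W.PosDef) :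
    ∃ τ > 0, ∃ c > 0, ∃ C ≥ 0, ∀ A : Matrix ι ι ℝ, (∀ k l, |A k l - W k l| < τ) →
      ∀ x, c * ‖x‖ ^ 2 ≤ quadForm A x ∧ quadForm A x ≤ C * ‖x‖ ^ 2 := by
  obtain ⟨c, hc, hcW⟩ := hW.exists_pos_mul_sq_norm_le_quadForm
  obtain ⟨τ, hτ, hτc⟩ := exists_pos_mul_lt (half_pos hc) (Fintype.card ι ^ 2 : ℝ)
  refine ⟨τ, hτ, c / 2, half_pos hc, ∑ k, ∑ l, |W k l| + c / 2, by positivity,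
    fun A hA x => ?_⟩
  have hsum : ∑ k, ∑ l, |(A - W) k l| ≤ c / 2 := calc
    _ ≤ ∑ _k : ι, ∑ _l : ι, τ := by gcongr with k _ l _; exact (hA k l).le
    _ = Fintype.card ι ^ 2 * τ := by simp [sq, mul_assoc]
    _ ≤ c / 2 := hτc.le
  have hAW := (abs_quadForm_le (A - W) x).trans (mul_le_mul_of_nonneg_right hsum (sq_nonneg _))
  rw [quadForm_sub, abs_le] at hAW
  have hWx := (abs_le.1 (abs_quadForm_le W x)).2
  constructor <;> linarith [hcW x]

end QuadForm

lemma IsCompact.exists_pos_le_norm_of_unique_zero {X F : Type*} [PseudoMetricSpace X]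
    [NormedAddCommGroup F] {Θ : Set X} {f : X → F} {x₀ : X} (hΘ : IsCompact Θ)
    (hf : ContinuousOn f Θ) (huniq : ∀ x ∈ Θ, f x = 0 → x = x₀) {ε : ℝ} (hε : 0 < ε) :
    ∃ δ > 0, ∀ x ∈ Θ, ε ≤ dist x x₀ → δ ≤ ‖f x‖ := by
  have hK : IsCompact (Θ ∩ {x | ε ≤ dist x x₀}) :=
    hΘ.inter_right (isClosed_le continuous_const (continuous_id.dist continuous_const))
  obtain ⟨δ, hδ, hδf⟩ := hK.exists_forall_le' (hf.mono Set.inter_subset_left).norm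
    (a := 0) fun x ⟨hxΘ, (hx : ε ≤ dist x x₀)⟩ => norm_pos_iff.2 fun h0 => by
      rw [huniq x hxΘ h0, dist_self] at hx; linarith
  exact ⟨δ, hδ, fun x hxΘ hx => hδf x ⟨hxΘ, hx⟩⟩

lemma exists_pos_le_and_mul_sq_lt {a b : ℝ} (ha : 0 < a) (C : ℝ) (hb : 0 < b) :
    ∃ η > 0, η ≤ a ∧ C * η ^ 2 < b := by
  have h : ∀ᶠ η in 𝓝 (0 : ℝ), η ≤ a ∧ C * η ^ 2 < b :=
    (eventually_le_nhds ha).and <| (by fun_prop : Continuous fun η : ℝ => C * η ^ 2).continuousAt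
      |>.eventually_lt continuousAt_const (by simpa using hb)
  exact ((h.filter_mono nhdsWithin_le_nhds).and (self_mem_nhdsWithin (s := Set.Ioi 0))).exists.imp
    fun η ⟨h, hη⟩ => ⟨hη, h⟩

lemma dist_lt_of_le_sInf_add {X F : Type*} [PseudoMetricSpace X] [SeminormedAddCommGroup F]
    {Θ : Set X} {β₀ b : X} {m Ψ : X → F} {q : F → ℝ} {c C δ η ε n e : ℝ}
    (hq : ∀ x, c * ‖x‖ ^ 2 ≤ q x ∧ q x ≤ C * ‖x‖ ^ 2) (hc : 0 ≤ c) (hC : 0 ≤ C) (hn : 0 ≤ n)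
    (hβ₀ : β₀ ∈ Θ) (hm0 : m β₀ = 0) (hmδ : ∀ β ∈ Θ, ε ≤ dist β β₀ → δ ≤ ‖m β‖)
    (hΨ : ∀ β ∈ Θ, ‖Ψ β - m β‖ < η) (hηδ : η ≤ δ / 2) (hb : b ∈ Θ)
    (hmin : n * q (Ψ b) ≤ sInf ((fun β => n * q (Ψ β)) '' Θ) + e)
    (he : e < n * (c * (δ / 2) ^ 2 - C * η ^ 2)) : dist b β₀ < ε := by
  by_contra! hfar
  have hbdd : BddBelow ((fun β => n * q (Ψ β)) '' Θ) := ⟨0, by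
    rintro _ ⟨β, -, rfl⟩
    exact mul_nonneg hn ((mul_nonneg hc (sq_nonneg _)).trans (hq _).1)⟩
  have hinf := csInf_le hbdd (Set.mem_image_of_mem _ hβ₀)
  have hΨβ₀ : ‖Ψ β₀‖ < η := by simpa [hm0] using hΨ β₀ hβ₀
  have hΨb : δ / 2 ≤ ‖Ψ b‖ := by
    have := norm_sub_norm_le (m b) (Ψ b)
    rw [norm_sub_rev] at this
    linarith [hmδ b hb hfar, hΨ b hb]
  have hlow : c * (δ / 2) ^ 2 ≤ q (Ψ b) := calc
    _ ≤ c * ‖Ψ b‖ ^ 2 := by gcongr; linarith [norm_nonneg (Ψ β₀)]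
    _ ≤ q (Ψ b) := (hq _).1
  have hup : q (Ψ β₀) ≤ C * η ^ 2 := calc
    _ ≤ C * ‖Ψ β₀‖ ^ 2 := (hq _).2
    _ ≤ C * η ^ 2 := by gcongr
  linarith [mul_le_mul_of_nonneg_left hlow hn, mul_le_mul_of_nonneg_left hup hn]

section Events

variable {Ω ι : Type*} [MeasurableSpace Ω] {P : Measure Ω} {l : Filter ι}

lemma tendsto_measure_zero_of_eventually_subset {A B : ι → Set Ω}
    (hB : Tendsto (fun i => P (B i)) l (𝓝 0)) (hAB : ∀ᶠ i in l, A i ⊆ B i) :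
    Tendsto (fun i => P (A i)) l (𝓝 0) :=
  tendsto_of_tendsto_of_tendsto_of_le_of_le' tendsto_const_nhds hB
    (Eventually.of_forall fun _ => zero_le) (hAB.mono fun _ h => measure_mono h)

lemma tendsto_measure_union_zero {A B : ι → Set Ω}
    (hA : Tendsto (fun i => P (A i)) l (𝓝 0)) (hB : Tendsto (fun i => P (B i)) l (𝓝 0)) :
    Tendsto (fun i => P (A i ∪ B i)) l (𝓝 0) :=
  tendsto_of_tendsto_of_tendsto_of_le_of_le tendsto_const_nhds (by simpa using hA.add hB)
    (fun _ => zero_le) fun i => measure_union_le (A i) (B i)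

lemma tendsto_measure_iUnion_zero {κ : Type*} [Fintype κ] {A : κ → ι → Set Ω}
    (hA : ∀ k, Tendsto (fun i => P (A k i)) l (𝓝 0)) :
    Tendsto (fun i => P (⋃ k, A k i)) l (𝓝 0) :=
  tendsto_of_tendsto_of_tendsto_of_le_of_le tendsto_const_nhds
    (by simpa using tendsto_finsetSum Finset.univ fun k _ => hA k) (fun _ => zero_le)
    fun i => measure_iUnion_fintype_le P fun k => A k i

end Events

theorem dimm_theorem1_consistency_general
    {Ω : Type*} [MeasurableSpace Ω] (P : Measure Ω)
    (p J : ℕ)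
    -- the estimating function and its population quantities
    (β₀ : EuclideanSpace ℝ (Fin p))
    (m : EuclideanSpace ℝ (Fin p) → EuclideanSpace ℝ (Fin J × Fin p))
    (v : EuclideanSpace ℝ (Fin p) → Matrix (Fin J × Fin p) (Fin J × Fin p) ℝ)
    -- the sample estimating function Ψ_N(β) = (1/N) Σᵢ ψ(β, Yᵢ)
    (Ψ : ℕ → EuclideanSpace ℝ (Fin p) → Ω → EuclideanSpace ℝ (Fin J × Fin p))
    -- Θ compact containing β₀; m continuous on Θ with unique zero at β₀
    (Θ : Set (EuclideanSpace ℝ (Fin p))) (hΘ : IsCompact Θ) (hβ₀Θ : β₀ ∈ Θ)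
    (hmcont : ContinuousOn m Θ)
    (hzero : m β₀ = 0) (huniq : ∀ β ∈ Θ, m β = 0 → β = β₀)
    -- v(β₀) symmetric positive definite
    (hvpd : (v β₀).PosDef)
    -- uniform convergence in probability of Ψ_N to m over Θ
    (hunif : ∀ ε : ℝ, 0 < ε →
      Tendsto (fun N => P {ω | ∃ β ∈ Θ, ε ≤ ‖Ψ N β ω - m β‖}) atTop (nhds (0 : ℝ≥0∞)))
    -- symmetric random weight matrices, invertible with probability tending to one,
    -- with V̂_N⁻¹ → v(β₀)⁻¹ in probability
    (Vhat : ℕ → Ω → Matrix (Fin J × Fin p) (Fin J × Fin p) ℝ)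
    (hVinvconv : ∀ k l,
      TendstoInMeasure P (fun N ω => (Vhat N ω)⁻¹ k l) atTop (fun _ => (v β₀)⁻¹ k l))
    -- the GMM objective Q_N(β) = N Ψ_N(β)ᵀ V̂_N⁻¹ Ψ_N(β)
    (Q : ℕ → EuclideanSpace ℝ (Fin p) → Ω → ℝ)
    (hQ : ∀ N β ω, Q N β ω =
      (N : ℝ) * ∑ k, ∑ l, Ψ N β ω k * ((Vhat N ω)⁻¹ k l * Ψ N β ω l))
    -- the measurable near-minimizer over Θ: Q_N(β̂_c^N) ≤ inf_Θ Q_N + o_p(1)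
    (βc : ℕ → Ω → EuclideanSpace ℝ (Fin p))
    (hβcΘ : ∀ N ω, βc N ω ∈ Θ)
    (err : ℕ → Ω → ℝ)
    (herr : TendstoInMeasure P err atTop (fun _ => (0 : ℝ)))
    (hmin : ∀ N ω, Q N (βc N ω) ω ≤ sInf ((fun β => Q N β ω) '' Θ) + err N ω) :
    -- conclusion: β̂_c^N → β₀ in probability
    TendstoInMeasure P (fun N => βc N) atTop (fun _ => β₀) := by
  obtain ⟨τ, hτ, c, hc, C, hC, hbounds⟩ := hvpd.inv.exists_quadForm_bounds_of_near
  refine tendstoInMeasure_iff_dist.2 fun ε hε => ?_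
  obtain ⟨δ, hδ, hmδ⟩ := hΘ.exists_pos_le_norm_of_unique_zero hmcont huniq hε
  obtain ⟨η, hη, hηδ, hηC⟩ := exists_pos_le_and_mul_sq_lt (half_pos hδ) C
    (by positivity : 0 < c * (δ / 2) ^ 2)
  have hlarge : ∀ᶠ N : ℕ in atTop, 1 < N * (c * (δ / 2) ^ 2 - C * η ^ 2) :=
    (tendsto_natCast_atTop_atTop.atTop_mul_const (sub_pos.2 hηC)).eventually_gt_atTop 1
  refine tendsto_measure_zero_of_eventually_subset
    (tendsto_measure_union_zero (tendsto_measure_union_zero (hunif η hη)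
      (tendsto_measure_iUnion_zero fun kl : (Fin J × Fin p) × (Fin J × Fin p) =>
        tendstoInMeasure_iff_dist.1 (hVinvconv kl.1 kl.2) τ hτ))
      (tendstoInMeasure_iff_dist.1 herr 1 one_pos)) (hlarge.mono fun N hN ω hfar => ?_)
  by_contra hgood
  simp only [Set.mem_union, Set.mem_iUnion, Set.mem_ofPred_eq, not_or, not_exists, not_and,
    not_le, Real.dist_eq, sub_zero] at hgood
  obtain ⟨⟨hΨ, hV⟩, herrN⟩ := hgood
  refine hfar.not_gt (dist_lt_of_le_sInf_add (e := err N ω)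
    (hbounds (Vhat N ω)⁻¹ fun k l => hV (k, l)) hc.le hC N.cast_nonneg hβ₀Θ hzero hmδ hΨ hηδ
    (hβcΘ N ω) ?_ ?_)
  · simpa only [hQ, quadForm] using hmin N ω
  · linarith [abs_lt.1 herrN]

/-- **Theorem 1 (Consistency of the combined GMM estimator).**
If `Θ` is compact with `β₀ ∈ Θ`, `m` is continuous on `Θ` with unique zero at `β₀`,
`v(β₀)` is symmetric positive definite, `Ψ_N` converges to `m` uniformly on `Θ` in
probability, `V̂_N` is invertible with probability tending to one with `V̂_N⁻¹ → v(β₀)⁻¹`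
in probability, and `β̂_c^N` is a near-minimizer of the GMM objective `Q_N` over `Θ`,
then `β̂_c^N → β₀` in probability. -/
theorem dimm_theorem1_consistency
    {Ω : Type*} [MeasurableSpace Ω] (P : Measure Ω) [IsProbabilityMeasure P]
    {E : Type*} [MeasurableSpace E]
    (p J : ℕ) (hp : 0 < p) (hJ : 0 < J)
    -- the i.i.d. data
    (Y : ℕ → Ω → E) (hYmeas : ∀ i, Measurable (Y i))
    (hYindep : iIndepFun Y P)
    (hYident : ∀ i, IdentDistrib (Y i) (Y 0) P P)
    -- the estimating function and its population quantities
    (ψ : EuclideanSpace ℝ (Fin p) → E → EuclideanSpace ℝ (Fin J × Fin p))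
    (hψmeas : Measurable fun x : EuclideanSpace ℝ (Fin p) × E => ψ x.1 x.2)
    (β₀ : EuclideanSpace ℝ (Fin p))
    (m : EuclideanSpace ℝ (Fin p) → EuclideanSpace ℝ (Fin J × Fin p))
    (hm : ∀ β, m β = ∫ ω, ψ β (Y 0 ω) ∂P)
    (v : EuclideanSpace ℝ (Fin p) → Matrix (Fin J × Fin p) (Fin J × Fin p) ℝ)
    (hv : ∀ β k l, v β k l = ∫ ω, ψ β (Y 0 ω) k * ψ β (Y 0 ω) l ∂P)
    -- the sample estimating function Ψ_N(β) = (1/N) Σᵢ ψ(β, Yᵢ)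
    (Ψ : ℕ → EuclideanSpace ℝ (Fin p) → Ω → EuclideanSpace ℝ (Fin J × Fin p))
    (hΨ : ∀ N β ω, Ψ N β ω = (N : ℝ)⁻¹ • ∑ i ∈ Finset.range N, ψ β (Y i ω))
    -- Θ compact containing β₀; m continuous on Θ with unique zero at β₀
    (Θ : Set (EuclideanSpace ℝ (Fin p))) (hΘ : IsCompact Θ) (hβ₀Θ : β₀ ∈ Θ)
    (hmcont : ContinuousOn m Θ)
    (hzero : m β₀ = 0) (huniq : ∀ β ∈ Θ, m β = 0 → β = β₀)
    -- v(β₀) symmetric positive definite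
    (hvpd : (v β₀).PosDef)
    -- uniform convergence in probability of Ψ_N to m over Θ
    (hunif : ∀ ε : ℝ, 0 < ε →
      Tendsto (fun N => P {ω | ∃ β ∈ Θ, ε ≤ ‖Ψ N β ω - m β‖}) atTop (nhds (0 : ℝ≥0∞)))
    -- symmetric random weight matrices, invertible with probability tending to one,
    -- with V̂_N⁻¹ → v(β₀)⁻¹ in probability
    (Vhat : ℕ → Ω → Matrix (Fin J × Fin p) (Fin J × Fin p) ℝ)
    (hVmeas : ∀ N k l, Measurable fun ω => Vhat N ω k l)
    (hVsymm : ∀ N ω, (Vhat N ω).IsSymm)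
    (hVunit : Tendsto (fun N => P {ω | IsUnit (Vhat N ω)}) atTop (nhds (1 : ℝ≥0∞)))
    (hVinvconv : ∀ k l,
      TendstoInMeasure P (fun N ω => (Vhat N ω)⁻¹ k l) atTop (fun _ => (v β₀)⁻¹ k l))
    -- the GMM objective Q_N(β) = N Ψ_N(β)ᵀ V̂_N⁻¹ Ψ_N(β)
    (Q : ℕ → EuclideanSpace ℝ (Fin p) → Ω → ℝ)
    (hQ : ∀ N β ω, Q N β ω =
      (N : ℝ) * ∑ k, ∑ l, Ψ N β ω k * ((Vhat N ω)⁻¹ k l * Ψ N β ω l))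
    -- the measurable near-minimizer over Θ: Q_N(β̂_c^N) ≤ inf_Θ Q_N + o_p(1)
    (βc : ℕ → Ω → EuclideanSpace ℝ (Fin p))
    (hβcmeas : ∀ N, Measurable (βc N))
    (hβcΘ : ∀ N ω, βc N ω ∈ Θ)
    (err : ℕ → Ω → ℝ)
    (herr : TendstoInMeasure P err atTop (fun _ => (0 : ℝ)))
    (hmin : ∀ N ω, Q N (βc N ω) ω ≤ sInf ((fun β => Q N β ω) '' Θ) + err N ω) :
    -- conclusion: β̂_c^N → β₀ in probability
    TendstoInMeasure P (fun N => βc N) atTop (fun _ => β₀) :=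
  dimm_theorem1_consistency_general P p J β₀ m v Ψ Θ hΘ hβ₀Θ hmcont hzero huniq hvpd hunif Vhat
    hVinvconv Q hQ βc hβcΘ err herr hmin
end

section
/- (Uniform convergence of the normalized GMM objective; key step in the proof of Theorem 1.) Suppose: Θ ⊂ ℝ^p is a set on which sup_{β∈Θ} ‖m(β)‖ < ∞; sup_{β∈Θ} ‖Ψ_N(β) − m(β)‖ → 0 in probability; V̂_N are random symmetric q×q matrices, invertible with probability tending to one, whose inverses V̂_N⁻¹ converge in probability to v(β₀)⁻¹ for a symmetric positive definite matrix v(β₀). Then sup_{β∈Θ} |(1/N) Q_N(β) − Q₀(β)| → 0 in probability as N → ∞, where Q_N(β) = N Ψ_N(β)ᵀ V̂_N⁻¹ Ψ_N(β) and Q₀(β) = m(β)ᵀ v(β₀)⁻¹ m(β). -/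
open MeasureTheory ProbabilityTheory Filter Matrix
open scoped ENNReal NNReal RealInnerProductSpace BigOperators Classical

/-!
The quadratic form `xᵀ W x` depends continuously on `(x, W)`, uniformly for `x` near a bounded
set: if every entry of `x - y` and of `W - A` is at most `δ` and `|y k| ≤ K`, the forms differ by
an explicit quantity that vanishes as `δ → 0`. Hence, off the events `sup_Θ ‖Ψ_N - m‖ ≥ δ` and
`|(V̂_N⁻¹ - v₀⁻¹)_{kl}| ≥ δ`, whose probabilities tend to zero, `Q_N / N` is uniformly
`ε`-close to `Q₀` on `Θ`.
-/

open Topology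

lemma abs_mul_mul_sub_mul_mul_le {xk xl yk yl w a δ K : ℝ}
    (hk : |xk - yk| ≤ δ) (hl : |xl - yl| ≤ δ) (hw : |w - a| ≤ δ)
    (hyk : |yk| ≤ K) (hyl : |yl| ≤ K) :
    |xk * (w * xl) - yk * (a * yl)| ≤ (|a| + δ) * (δ * (2 * K + δ)) + δ * K ^ 2 := by
  have hδ : 0 ≤ δ := (abs_nonneg _).trans hk
  have hK : 0 ≤ K := (abs_nonneg _).trans hyk
  have hw' : |w| ≤ |a| + δ := by linarith [abs_sub_abs_le_abs_sub w a]
  have hxl : |xl| ≤ K + δ := by linarith [abs_sub_abs_le_abs_sub xl yl]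
  calc |xk * (w * xl) - yk * (a * yl)|
      = |(xk - yk) * (w * xl) + yk * (w * (xl - yl)) + yk * ((w - a) * yl)| := by ring_nf
    _ ≤ |xk - yk| * (|w| * |xl|) + |yk| * (|w| * |xl - yl|) + |yk| * (|w - a| * |yl|) := by
        simp only [← abs_mul]
        exact abs_add_three _ _ _
    _ ≤ δ * ((|a| + δ) * (K + δ)) + K * ((|a| + δ) * δ) + K * (δ * K) := by
        gcongr
    _ = (|a| + δ) * (δ * (2 * K + δ)) + δ * K ^ 2 := by ring

lemma abs_quadForm_sub_le {ι : Type*} [Fintype ι] {x y : ι → ℝ} {W A : Matrix ι ι ℝ}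
    {δ K : ℝ} (hx : ∀ k, |x k - y k| ≤ δ) (hy : ∀ k, |y k| ≤ K)
    (hW : ∀ k l, |W k l - A k l| ≤ δ) :
    |∑ k, ∑ l, x k * (W k l * x l) - ∑ k, ∑ l, y k * (A k l * y l)| ≤
      ∑ k, ∑ l, ((|A k l| + δ) * (δ * (2 * K + δ)) + δ * K ^ 2) := by
  simp only [← Finset.sum_sub_distrib]
  refine (Finset.abs_sum_le_sum_abs _ _).trans (Finset.sum_le_sum fun k _ => ?_)
  refine (Finset.abs_sum_le_sum_abs _ _).trans (Finset.sum_le_sum fun l _ => ?_)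
  exact abs_mul_mul_sub_mul_mul_le (hx k) (hx l) (hW k l) (hy k) (hy l)

lemma exists_pos_forall_abs_quadForm_sub_lt {ι : Type*} [Fintype ι] (A : Matrix ι ι ℝ) (K : ℝ)
    {ε : ℝ} (hε : 0 < ε) :
    ∃ δ > 0, ∀ (x y : ι → ℝ) (W : Matrix ι ι ℝ), (∀ k, |x k - y k| < δ) →
      (∀ k, |y k| ≤ K) → (∀ k l, |W k l - A k l| < δ) →
        |∑ k, ∑ l, x k * (W k l * x l) - ∑ k, ∑ l, y k * (A k l * y l)| < ε := by
  set bound : ℝ → ℝ := fun δ => ∑ k, ∑ l, ((|A k l| + δ) * (δ * (2 * K + δ)) + δ * K ^ 2)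
  have hbound : Tendsto bound (𝓝[>] 0) (𝓝 0) := by
    have : Continuous bound := by fun_prop
    simpa [bound] using this.continuousWithinAt.tendsto (s := Set.Ioi 0) (x := 0)
  obtain ⟨δ, hδε, hδ⟩ :=
    ((hbound.eventually (gt_mem_nhds hε)).and self_mem_nhdsWithin).exists
  exact ⟨δ, hδ, fun x y W hx hy hW => (abs_quadForm_sub_le (fun k => (hx k).le) hy
    (fun k l => (hW k l).le)).trans_lt hδε⟩

lemma tendsto_measure_zero_of_subset_union_iUnion {Ω α ι : Type*} [MeasurableSpace Ω]
    [Fintype ι] {μ : Measure Ω} {l : Filter α} {E F : α → Set Ω} {G : ι → α → Set Ω}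
    (hE : ∀ᶠ n in l, E n ⊆ F n ∪ ⋃ i, G i n) (hF : Tendsto (fun n => μ (F n)) l (𝓝 0))
    (hG : ∀ i, Tendsto (fun n => μ (G i n)) l (𝓝 0)) :
    Tendsto (fun n => μ (E n)) l (𝓝 0) := by
  have hsum : Tendsto (fun n => μ (F n) + ∑ i, μ (G i n)) l (𝓝 0) := by
    simpa using hF.add (tendsto_finsetSum _ fun i _ => hG i)
  refine tendsto_of_tendsto_of_tendsto_of_le_of_le' tendsto_const_nhds hsum
    (Eventually.of_forall fun _ => zero_le) (hE.mono fun n hn => ?_)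
  calc μ (E n) ≤ μ (F n ∪ ⋃ i, G i n) := measure_mono hn
    _ ≤ μ (F n) + ∑ i, μ (G i n) :=
      (measure_union_le _ _).trans (add_le_add_right (measure_iUnion_fintype_le _ _) _)

theorem dimm_uniform_convergence_objective_general
    {Ω : Type*} [MeasurableSpace Ω] (P : Measure Ω)
    (p q : ℕ)
    -- the random functions Ψ_N and the fixed function m
    (Ψ : ℕ → EuclideanSpace ℝ (Fin p) → Ω → EuclideanSpace ℝ (Fin q))
    (m : EuclideanSpace ℝ (Fin p) → EuclideanSpace ℝ (Fin q))
    -- the fixed symmetric positive definite matrix v(β₀)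
    (v₀ : Matrix (Fin q) (Fin q) ℝ)
    -- the set Θ, with m bounded on Θ
    (Θ : Set (EuclideanSpace ℝ (Fin p)))
    (K : ℝ) (hK : ∀ β ∈ Θ, ‖m β‖ ≤ K)
    -- uniform convergence in probability of Ψ_N to m over Θ
    (hunif : ∀ ε : ℝ, 0 < ε →
      Tendsto (fun N => P {ω | ∃ β ∈ Θ, ε ≤ ‖Ψ N β ω - m β‖}) atTop (nhds (0 : ℝ≥0∞)))
    -- symmetric random weight matrices, invertible with probability tending to one,
    -- with V̂_N⁻¹ → v(β₀)⁻¹ in probability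
    (Vhat : ℕ → Ω → Matrix (Fin q) (Fin q) ℝ)
    (hVinvconv : ∀ k l,
      TendstoInMeasure P (fun N ω => (Vhat N ω)⁻¹ k l) atTop (fun _ => v₀⁻¹ k l))
    -- the objectives
    (Q : ℕ → EuclideanSpace ℝ (Fin p) → Ω → ℝ)
    (hQ : ∀ N β ω, Q N β ω =
      (N : ℝ) * ∑ k, ∑ l, Ψ N β ω k * ((Vhat N ω)⁻¹ k l * Ψ N β ω l))
    (Q₀ : EuclideanSpace ℝ (Fin p) → ℝ)
    (hQ₀ : ∀ β, Q₀ β = ∑ k, ∑ l, m β k * (v₀⁻¹ k l * m β l)) :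
    -- conclusion: sup_{β ∈ Θ} |(1/N) Q_N(β) − Q₀(β)| → 0 in probability
    ∀ ε : ℝ, 0 < ε →
      Tendsto (fun N : ℕ => P {ω | ∃ β ∈ Θ, ε ≤ |(N : ℝ)⁻¹ * Q N β ω - Q₀ β|})
        atTop (nhds (0 : ℝ≥0∞)) := by
  intro ε hε
  obtain ⟨δ, hδ, hquad⟩ := exists_pos_forall_abs_quadForm_sub_lt v₀⁻¹ K hε
  refine tendsto_measure_zero_of_subset_union_iUnion
    (F := fun N => {ω | ∃ β ∈ Θ, δ ≤ ‖Ψ N β ω - m β‖})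
    (G := fun (kl : Fin q × Fin q) N => {ω | δ ≤ ‖(Vhat N ω)⁻¹ kl.1 kl.2 - v₀⁻¹ kl.1 kl.2‖})
    ?_ (hunif δ hδ) fun kl => tendstoInMeasure_iff_norm.1 (hVinvconv kl.1 kl.2) δ hδ
  filter_upwards [eventually_ne_atTop 0] with N hN ω ⟨β, hβ, hεβ⟩
  contrapose! hεβ
  simp only [Set.mem_union, Set.mem_iUnion, Set.mem_ofPred_eq, not_or, not_exists, not_and,
    not_le] at hεβ
  obtain ⟨hΨ, hV⟩ := hεβ
  rw [hQ, inv_mul_cancel_left₀ (Nat.cast_ne_zero.2 hN), hQ₀]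
  exact hquad _ _ _ (fun k => (PiLp.norm_apply_le (Ψ N β ω - m β) k).trans_lt (hΨ β hβ))
    (fun k => (PiLp.norm_apply_le (m β) k).trans (hK β hβ)) fun k l => hV (k, l)

/-- **Uniform convergence of the normalized GMM objective** (key step in the proof of
Theorem 1). If `sup_Θ ‖m‖ < ∞`, `sup_Θ ‖Ψ_N − m‖ → 0` in probability, and the symmetric
random matrices `V̂_N` are invertible with probability tending to one with
`V̂_N⁻¹ → v(β₀)⁻¹` in probability, then `sup_Θ |Q_N/N − Q₀| → 0` in probability, where
`Q_N(β) = N Ψ_N(β)ᵀ V̂_N⁻¹ Ψ_N(β)` and `Q₀(β) = m(β)ᵀ v(β₀)⁻¹ m(β)`. -/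
theorem dimm_uniform_convergence_objective
    {Ω : Type*} [MeasurableSpace Ω] (P : Measure Ω) [IsProbabilityMeasure P]
    (p q : ℕ)
    -- the random functions Ψ_N and the fixed function m
    (Ψ : ℕ → EuclideanSpace ℝ (Fin p) → Ω → EuclideanSpace ℝ (Fin q))
    (hΨmeas : ∀ N, Measurable fun x : EuclideanSpace ℝ (Fin p) × Ω => Ψ N x.1 x.2)
    (m : EuclideanSpace ℝ (Fin p) → EuclideanSpace ℝ (Fin q))
    -- the fixed symmetric positive definite matrix v(β₀)
    (v₀ : Matrix (Fin q) (Fin q) ℝ) (hv₀ : v₀.PosDef)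
    -- the set Θ, with m bounded on Θ
    (Θ : Set (EuclideanSpace ℝ (Fin p)))
    (K : ℝ) (hK : ∀ β ∈ Θ, ‖m β‖ ≤ K)
    -- uniform convergence in probability of Ψ_N to m over Θ
    (hunif : ∀ ε : ℝ, 0 < ε →
      Tendsto (fun N => P {ω | ∃ β ∈ Θ, ε ≤ ‖Ψ N β ω - m β‖}) atTop (nhds (0 : ℝ≥0∞)))
    -- symmetric random weight matrices, invertible with probability tending to one,
    -- with V̂_N⁻¹ → v(β₀)⁻¹ in probability
    (Vhat : ℕ → Ω → Matrix (Fin q) (Fin q) ℝ)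
    (hVmeas : ∀ N k l, Measurable fun ω => Vhat N ω k l)
    (hVsymm : ∀ N ω, (Vhat N ω).IsSymm)
    (hVunit : Tendsto (fun N => P {ω | IsUnit (Vhat N ω)}) atTop (nhds (1 : ℝ≥0∞)))
    (hVinvconv : ∀ k l,
      TendstoInMeasure P (fun N ω => (Vhat N ω)⁻¹ k l) atTop (fun _ => v₀⁻¹ k l))
    -- the objectives
    (Q : ℕ → EuclideanSpace ℝ (Fin p) → Ω → ℝ)
    (hQ : ∀ N β ω, Q N β ω =
      (N : ℝ) * ∑ k, ∑ l, Ψ N β ω k * ((Vhat N ω)⁻¹ k l * Ψ N β ω l))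
    (Q₀ : EuclideanSpace ℝ (Fin p) → ℝ)
    (hQ₀ : ∀ β, Q₀ β = ∑ k, ∑ l, m β k * (v₀⁻¹ k l * m β l)) :
    -- conclusion: sup_{β ∈ Θ} |(1/N) Q_N(β) − Q₀(β)| → 0 in probability
    ∀ ε : ℝ, 0 < ε →
      Tendsto (fun N : ℕ => P {ω | ∃ β ∈ Θ, ε ≤ |(N : ℝ)⁻¹ * Q N β ω - Q₀ β|})
        atTop (nhds (0 : ℝ≥0∞)) :=
  dimm_uniform_convergence_objective_general P p q Ψ m v₀ Θ K hK hunif Vhat hVinvconv Q hQ Q₀ hQ₀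
end
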